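/- Let k be even and δ₁ = [[√13, -14/(3√13)],[3√13, -√13]], δ₂ = [[5,-2],[13,-5]], δ₃ = [[-√13, 4/√13],[-7√13/2, √13]], and A = [[(13+√13)/39,(13-√13)/39],[1,1]]. Define g̃(z) = C·z^{-k/2}|_k A⁻¹. Then g̃|δ₁ = (-1)^{k/2} g̃, g̃|δ₂ = (-1)^{k/2} g̃, and g̃|δ₃ = (-1)^{3k/2} g̃ (interpreting (-1)^{k/2} with k/2 ∈ ℤ). -/

import Mathlib

/-!
Since `k = 2m` is even, `z^{-k/2} = z^{-m}` has an integral exponent, so the branch plays no role.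
Each `δᵢ` is conjugated by `A` to an antidiagonal matrix: `δᵢ A = A Sᵢ` with `Sᵢ = [[0, -b], [c, 0]]`.
The stroke operator is a right action on the upper half-plane, so `g̃|δᵢ = (z^{-m}|Sᵢ)|A⁻¹`, and a
direct computation shows `z^{-m}|S = (-1)^m z^{-m}` for every such `S`.
-/

open Complex Matrix

/-- The weight-`k` stroke operator for a real `2×2` matrix `γ` (with positive
determinant): `(f|γ)(z) = det(γ)^{k/2}(cz+d)^{-k} f((az+b)/(cz+d))`, for `k` even. -/
noncomputable def stroke (k : ℕ) (γ : Matrix (Fin 2) (Fin 2) ℝ) (f : ℂ → ℂ) : ℂ → ℂ :=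
  fun z => (γ.det : ℂ) ^ ((k : ℤ) / 2) * ((γ 1 0 : ℂ) * z + (γ 1 1 : ℂ)) ^ (-(k : ℤ)) *
    f (((γ 0 0 : ℂ) * z + (γ 0 1 : ℂ)) / ((γ 1 0 : ℂ) * z + (γ 1 1 : ℂ)))

/-- `δ₁ = [[√13, -14/(3√13)],[3√13, -√13]]`. -/
noncomputable def δ₁ : Matrix (Fin 2) (Fin 2) ℝ :=
  !![Real.sqrt 13, -14 / (3 * Real.sqrt 13); 3 * Real.sqrt 13, -Real.sqrt 13]

/-- `δ₂ = [[5,-2],[13,-5]]`. -/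
noncomputable def δ₂ : Matrix (Fin 2) (Fin 2) ℝ := !![5, -2; 13, -5]

/-- `δ₃ = [[-√13, 4/√13],[-7√13/2, √13]]`. -/
noncomputable def δ₃ : Matrix (Fin 2) (Fin 2) ℝ :=
  !![-Real.sqrt 13, 4 / Real.sqrt 13; -7 * Real.sqrt 13 / 2, Real.sqrt 13]

/-- `A = [[(13+√13)/39, (13-√13)/39],[1,1]]`. -/
noncomputable def A : Matrix (Fin 2) (Fin 2) ℝ :=
  !![(13 + Real.sqrt 13) / 39, (13 - Real.sqrt 13) / 39; 1, 1]

lemma ofReal_mul_add_ofReal_ne_zero {c d : ℝ} {z : ℂ} (hz : 0 < z.im) (hcd : c ≠ 0 ∨ d ≠ 0) :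
    (c : ℂ) * z + d ≠ 0 := by
  intro h
  have hc : c = 0 := by simpa [hz.ne'] using congrArg Complex.im h
  have hd : d = 0 := by simpa [hc] using congrArg Complex.re h
  simp [hc, hd] at hcd

lemma inv_mul_eq_mul_inv_of_mul_eq {n : Type*} [Fintype n] [DecidableEq n]
    {M δ S : Matrix n n ℝ} (hM : IsUnit M.det) (h : δ * M = M * S) : M⁻¹ * δ = S * M⁻¹ :=
  calc M⁻¹ * δ = M⁻¹ * (δ * M) * M⁻¹ := by
        rw [Matrix.mul_assoc, Matrix.mul_assoc, mul_nonsing_inv _ hM, Matrix.mul_one]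
    _ = S * M⁻¹ := by rw [h, ← Matrix.mul_assoc, nonsing_inv_mul _ hM, Matrix.one_mul]

section

variable {k : ℕ} {γ δ S : Matrix (Fin 2) (Fin 2) ℝ} {z : ℂ}

lemma denom_ne_zero (hγ : γ.det ≠ 0) (hz : 0 < z.im) : (γ 1 0 : ℂ) * z + γ 1 1 ≠ 0 :=
  ofReal_mul_add_ofReal_ne_zero hz (by by_contra! h; simp [det_fin_two, h] at hγ)

lemma im_mobius_pos (hγ : 0 < γ.det) (hz : 0 < z.im) :
    0 < (((γ 0 0 : ℂ) * z + γ 0 1) / ((γ 1 0 : ℂ) * z + γ 1 1)).im := by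
  rw [div_im, div_sub_div_same]
  refine div_pos ?_ (normSq_pos.mpr (denom_ne_zero hγ.ne' hz))
  have hnum : ((γ 0 0 : ℂ) * z + γ 0 1).im * ((γ 1 0 : ℂ) * z + γ 1 1).re
      - ((γ 0 0 : ℂ) * z + γ 0 1).re * ((γ 1 0 : ℂ) * z + γ 1 1).im = γ.det * z.im := by
    simp [det_fin_two]; ring
  rw [hnum]; positivity

lemma stroke_stroke_apply (f : ℂ → ℂ) (hγ : γ.det ≠ 0) (hδ : δ.det ≠ 0) (hz : 0 < z.im) :
    stroke k δ (stroke k γ f) z = stroke k (γ * δ) f z := by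
  have hq := denom_ne_zero hδ hz
  have hP := denom_ne_zero (γ := γ * δ) (by rw [det_mul]; exact mul_ne_zero hγ hδ) hz
  simp only [stroke, det_mul, mul_apply, Fin.sum_univ_two] at hP ⊢
  push_cast at hP ⊢
  set q := (δ 1 0 : ℂ) * z + δ 1 1
  have hdenom : (γ 1 0 : ℂ) * (((δ 0 0 : ℂ) * z + δ 0 1) / q) + γ 1 1
      = ((γ 1 0 * δ 0 0 + γ 1 1 * δ 1 0 : ℂ) * z + (γ 1 0 * δ 0 1 + γ 1 1 * δ 1 1)) / q := by
    field_simp; ring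
  have hnum : (γ 0 0 : ℂ) * (((δ 0 0 : ℂ) * z + δ 0 1) / q) + γ 0 1
      = ((γ 0 0 * δ 0 0 + γ 0 1 * δ 1 0 : ℂ) * z + (γ 0 0 * δ 0 1 + γ 0 1 * δ 1 1)) / q := by
    field_simp; ring
  rw [hdenom, hnum, div_div_div_cancel_right₀ hq, div_zpow, mul_zpow]
  field_simp

lemma stroke_stroke_eq_smul_of_mul_eq {f : ℂ → ℂ} {ε : ℂ} (hγ : 0 < γ.det) (hS : S.det ≠ 0)
    (hconj : γ * δ = S * γ) (hf : ∀ w : ℂ, 0 < w.im → stroke k S f w = ε * f w)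
    (hz : 0 < z.im) :
    stroke k δ (stroke k γ f) z = ε * stroke k γ f z := by
  have hδ : δ.det ≠ 0 := by
    have h := congrArg det hconj
    rw [det_mul, det_mul, mul_comm S.det] at h
    rwa [mul_left_cancel₀ hγ.ne' h]
  rw [stroke_stroke_apply f hγ.ne' hδ hz, hconj, ← stroke_stroke_apply f hS hγ.ne' hz]
  change _ * _ * stroke k S f _ = ε * (_ * _ * f _)
  rw [hf _ (im_mobius_pos hγ hz)]
  ring

end

lemma stroke_antidiag_zpow (m : ℕ) {b c : ℝ} (hb : b ≠ 0) (hc : c ≠ 0) (C : ℂ) {w : ℂ}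
    (hw : w ≠ 0) :
    stroke (2 * m) !![0, -b; c, 0] (fun u => C * u ^ (-(m : ℤ))) w
      = (-1) ^ m * (C * w ^ (-(m : ℤ))) := by
  have hm : ((2 * m : ℕ) : ℤ) / 2 = m := by omega
  simp only [stroke, hm, _root_.zpow_neg, zpow_natCast, det_fin_two_of, of_apply, cons_val',
    cons_val_zero, cons_val_one, empty_val', cons_val_fin_one]
  push_cast
  simp only [mul_zero, zero_mul, zero_add, add_zero, zero_sub, neg_mul, neg_neg, neg_div,
    neg_pow (_ / _), div_pow]
  have hb' : (b : ℂ) ≠ 0 := by exact_mod_cast hb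
  have hc' : (c : ℂ) ≠ 0 := by exact_mod_cast hc
  have hsq : ((-1 : ℂ) ^ m) ^ 2 = 1 := by rw [← pow_mul, pow_mul']; norm_num
  field_simp
  rw [hsq]
  ring

lemma sq_sqrt_thirteen : Real.sqrt 13 ^ 2 = 13 := Real.sq_sqrt (by norm_num)

lemma det_A_pos : 0 < A.det := by
  rw [A, det_fin_two_of]
  ring_nf
  positivity

lemma δ₁_mul_A : δ₁ * A = A * !![0, -1; 1, 0] := by
  have := sq_sqrt_thirteen
  ext i j
  fin_cases i <;> fin_cases j <;> simp [δ₁, A, mul_apply, Fin.sum_univ_two] <;> field_simp <;> grind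

lemma δ₂_mul_A : δ₂ * A = A * !![0, -((Real.sqrt 13 + 2) / 3); (Real.sqrt 13 - 2) / 3, 0] := by
  have := sq_sqrt_thirteen
  ext i j
  fin_cases i <;> fin_cases j <;> simp [δ₂, A, mul_apply, Fin.sum_univ_two] <;> field_simp <;> grind

lemma δ₃_mul_A :
    δ₃ * A = A * !![0, -((Real.sqrt 13 - 7) / 6); -((Real.sqrt 13 + 7) / 6), 0] := by
  have := sq_sqrt_thirteen
  ext i j
  fin_cases i <;> fin_cases j <;> simp [δ₃, A, mul_apply, Fin.sum_univ_two] <;> field_simp <;> grind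

lemma stroke_stroke_A_inv_zpow (m : ℕ) (C : ℂ) {δ : Matrix (Fin 2) (Fin 2) ℝ} {b c : ℝ}
    (hb : b ≠ 0) (hc : c ≠ 0) (hconj : δ * A = A * !![0, -b; c, 0]) {z : ℂ} (hz : 0 < z.im) :
    stroke (2 * m) δ (stroke (2 * m) A⁻¹ (fun u => C * u ^ (-(m : ℤ)))) z
      = (-1) ^ m * stroke (2 * m) A⁻¹ (fun u => C * u ^ (-(m : ℤ))) z := by
  refine stroke_stroke_eq_smul_of_mul_eq ?_ ?_
    (inv_mul_eq_mul_inv_of_mul_eq det_A_pos.ne'.isUnit hconj)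
    (fun w hw => stroke_antidiag_zpow m hb hc C (ne_of_apply_ne im hw.ne')) hz
  · rw [det_nonsing_inv, Ring.inverse_eq_inv']
    exact inv_pos.mpr det_A_pos
  · simp [det_fin_two_of, hb, hc]

theorem gtilde_transformation_general (k : ℕ) (hke : Even k) (C : ℂ) :
    let gt : ℂ → ℂ := stroke k A⁻¹ (fun z => C * z ^ (-(k : ℂ) / 2))
    (∀ z : ℂ, 0 < z.im → stroke k δ₁ gt z = (-1 : ℂ) ^ (k / 2) * gt z) ∧
    (∀ z : ℂ, 0 < z.im → stroke k δ₂ gt z = (-1 : ℂ) ^ (k / 2) * gt z) ∧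
    (∀ z : ℂ, 0 < z.im → stroke k δ₃ gt z = (-1 : ℂ) ^ (3 * (k / 2)) * gt z) := by
  obtain ⟨m, rfl⟩ := hke.two_dvd
  have hpow : (fun z : ℂ => C * z ^ (-((2 * m : ℕ) : ℂ) / 2)) = fun z => C * z ^ (-(m : ℤ)) := by
    funext z; rw [← cpow_intCast]; push_cast; ring_nf
  have h3m : (-1 : ℂ) ^ (3 * m) = (-1) ^ m := by rw [pow_mul]; norm_num
  simp only [hpow, Nat.mul_div_cancel_left m two_pos, h3m]
  have := sq_sqrt_thirteen
  refine ⟨fun z hz => ?_, fun z hz => ?_, fun z hz => ?_⟩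
  · exact stroke_stroke_A_inv_zpow m C one_ne_zero one_ne_zero δ₁_mul_A hz
  · exact stroke_stroke_A_inv_zpow m C (by positivity) (by nlinarith) δ₂_mul_A hz
  · exact stroke_stroke_A_inv_zpow m C (by nlinarith) (by nlinarith) δ₃_mul_A hz

/-- With `g̃(z) = C·z^{-k/2}|ₖA⁻¹` (principal branch), one has
`g̃|δ₁ = (-1)^{k/2} g̃`, `g̃|δ₂ = (-1)^{k/2} g̃` and `g̃|δ₃ = (-1)^{3k/2} g̃`
on the upper half-plane, for every positive even `k` and every constant `C`. -/
theorem gtilde_transformation (k : ℕ) (hk : 0 < k) (hke : Even k) (C : ℂ) :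
    let gt : ℂ → ℂ := stroke k A⁻¹ (fun z => C * z ^ (-(k : ℂ) / 2))
    (∀ z : ℂ, 0 < z.im → stroke k δ₁ gt z = (-1 : ℂ) ^ (k / 2) * gt z) ∧
    (∀ z : ℂ, 0 < z.im → stroke k δ₂ gt z = (-1 : ℂ) ^ (k / 2) * gt z) ∧
    (∀ z : ℂ, 0 < z.im → stroke k δ₃ gt z = (-1 : ℂ) ^ (3 * (k / 2)) * gt z) :=
  gtilde_transformation_general k hke C
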